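/- Let q = m/n ∈ ℚ ∩ (0,1/2) (in lowest terms) and let α ∈ KS with q(α) = q. If the first n+1 symbols of α form the word c_q, and d := σ^{n+1}(α), then d ⪯ 1σ²(α) in the unimodal order, where 1σ²(α) denotes the sequence whose 0th entry is 1 and whose (i+1)st entry is α_{i+2}. -/

import Mathlib

open Set

/-- Binary sequences. -/
abbrev Bseq := ℕ → Fin 2

/-- The strict unimodal order on binary sequences: `α ≺ β` iff at the least index `r` where
they differ, the sum `∑_{i=0}^r α_i` is even. -/
def umLT (α β : Bseq) : Prop :=
  ∃ r : ℕ, (∀ i, i < r → α i = β i) ∧ α r ≠ β r ∧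
    Even (∑ i ∈ Finset.range (r + 1), ((α i : ℕ)))

/-- `α ⪯ β` in the unimodal order. -/
def umLE (α β : Bseq) : Prop := umLT α β ∨ α = β

/-- The `r`-fold shift `σ^r`. -/
def shiftSeq (r : ℕ) (α : Bseq) : Bseq := fun i => α (i + r)

/-- A sequence is maximal if all its shifts are `⪯` it. -/
def MaximalSeq (α : Bseq) : Prop := ∀ r : ℕ, umLE (shiftSeq r α) α

/-- Membership in `KS`: maximal sequences whose first two symbols are `10`. -/
def KSseq (α : Bseq) : Prop := MaximalSeq α ∧ α 0 = 1 ∧ α 1 = 0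

/-- A (purely) periodic sequence. -/
def PeriodicSeq (α : Bseq) : Prop := ∃ p : ℕ, 0 < p ∧ ∀ i, α (i + p) = α i

/-- The periodic sequence `W^∞` determined by a finite word `W`. -/
def perSeq (W : List (Fin 2)) : Bseq := fun i => W.getD (i % W.length) 0

/-- The sequence `V W^∞`. -/
def preperSeq (V W : List (Fin 2)) : Bseq :=
  fun i => if i < V.length then V.getD i 0 else perSeq W (i - V.length)

/-- The sequence `10 1^∞`. -/
def seq101 : Bseq := fun i => if i = 1 then 0 else 1

/-- The sequence `1σ²(α)`: `1` followed by `α₂ α₃ ⋯`. -/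
def oneShift2 (α : Bseq) : Bseq := fun i => if i = 0 then 1 else α (i + 1)

/-- `κ_i(q)`: `κ_1(q) = ⌊1/q⌋ - 1`, and `κ_i(q) = ⌊i/q⌋ - ⌊(i-1)/q⌋ - 2` for `i ≥ 2`. -/
noncomputable def kap (q : ℝ) (i : ℕ) : ℕ :=
  if i = 1 then (⌊1 / q⌋ - 1).toNat
  else (⌊(i : ℝ) / q⌋ - ⌊((i : ℝ) - 1) / q⌋ - 2).toNat

/-- The word `1 0^{κ_j(q)} 11 0^{κ_{j+1}(q)} 11 ⋯ 11 0^{κ_{j+M}(q)}`: an initial block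
indexed `j` followed by `M` further blocks. -/
noncomputable def tailBody (q : ℝ) (j M : ℕ) : List (Fin 2) :=
  1 :: (List.replicate (kap q j) 0 ++
    (((List.range M).map fun t => 1 :: 1 :: List.replicate (kap q (j + 1 + t)) 0).flatten))

/-- The word `c_q = 1 0^{κ_1(q)} 11 0^{κ_2(q)} 11 ⋯ 11 0^{κ_m(q)} 1`. -/
noncomputable def cqWord (q : ℝ) (m : ℕ) : List (Fin 2) := tailBody q 1 (m - 1) ++ [1]

/-- The word `w_q`, obtained from `c_q` by deleting its last two symbols. -/
noncomputable def wqWord (q : ℝ) (m : ℕ) : List (Fin 2) := (cqWord q m).dropLast.dropLast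

/-- The word `ŵ_q`, the reverse of `w_q`. -/
noncomputable def hwqWord (q : ℝ) (m : ℕ) : List (Fin 2) := (wqWord q m).reverse

/-- The finite word `1 0^{κ_j(q)} 11 0^{κ_{j+1}(q)} ⋯ 11 0^{κ_m(q)} 1`. -/
noncomputable def tailWord (q : ℝ) (j m : ℕ) : List (Fin 2) := tailBody q j (m - j) ++ [1]

/-- The word `1 0^{κ_1(q)-1} 11 0^{κ_2(q)} 11 ⋯` with `M` blocks after the first
(no closing `1`). -/
noncomputable def lowBody (q : ℝ) (M : ℕ) : List (Fin 2) :=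
  1 :: (List.replicate (kap q 1 - 1) 0 ++
    (((List.range M).map fun t => 1 :: 1 :: List.replicate (kap q (2 + t)) 0).flatten))

/-- The finite word `1 0^{κ_1(q)-1} 11 0^{κ_2(q)} ⋯ 11 0^{κ_m(q)} 1`. -/
noncomputable def lowWord (q : ℝ) (m : ℕ) : List (Fin 2) := lowBody q (m - 1) ++ [1]

/-- The infinite sequence `1 0^{κ_j(q)} 11 0^{κ_{j+1}(q)} 11 0^{κ_{j+2}(q)} 11 ⋯`. -/
noncomputable def tailSeq (q : ℝ) (j : ℕ) : Bseq := fun i => (tailBody q j (i + 1)).getD i 0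

/-- The infinite sequence `1 0^{κ_1(q)-1} 11 0^{κ_2(q)} 11 0^{κ_3(q)} 11 ⋯`. -/
noncomputable def lowSeq (q : ℝ) : Bseq := fun i => (lowBody q (i + 1)).getD i 0

/-- The height `q(α) = inf({q ∈ (0,1/2] ∩ ℚ : (c_q0)^∞ ≺ α} ∪ {1/2})`. -/
noncomputable def height (α : Bseq) : ℝ :=
  sInf ({x : ℝ | ∃ q : ℚ, x = (q : ℝ) ∧ 0 < q ∧ q ≤ 1 / 2 ∧
    umLT (perSeq (cqWord (q : ℝ) q.num.toNat ++ [0])) α} ∪ {1 / 2})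

/-- A unimodal map `f : [a,b] → [a,b]` with turning point `c`. -/
structure Unimodal (a b c : ℝ) (f : ℝ → ℝ) : Prop where
  a_lt_b : a < b
  c_mem : c ∈ Ioo a b
  cont : ContinuousOn f (Icc a b)
  maps : MapsTo f (Icc a b) (Icc a b)
  mono : StrictMonoOn f (Icc a c)
  anti : StrictAntiOn f (Icc c b)
  map_c : f c = b
  map_b : f b = a

/-- `α` is an itinerary of `x` under the unimodal map `f` with turning point `c`. -/
def IsItin (f : ℝ → ℝ) (a b c x : ℝ) (α : Bseq) : Prop :=
  ∀ r : ℕ, (α r = 0 → f^[r] x ∈ Icc a c) ∧ (α r = 1 → f^[r] x ∈ Icc c b)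

/-- `κ` is the kneading sequence of `f`: the itinerary of `b` smallest in the unimodal order. -/
def IsKneading (f : ℝ → ℝ) (a b c : ℝ) (κ : Bseq) : Prop :=
  IsItin f a b c b κ ∧ ∀ β : Bseq, IsItin f a b c b β → umLE κ β

/-- The standing convention on unimodal maps. -/
structure Convention (f : ℝ → ℝ) (a b c : ℝ) (κ : Bseq) : Prop where
  kneading : IsKneading f a b c κ
  gt101 : umLT seq101 κ
  itin_inj : ¬ PeriodicSeq κ → ∀ x ∈ Icc a b, ∀ y ∈ Icc a b, ∀ α : Bseq,
      IsItin f a b c x α → IsItin f a b c y α → x = y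
  two_fixed : ∀ n : ℕ, 0 < n → ∀ μ : Bseq,
      {x | x ∈ Icc a b ∧ f^[n] x = x ∧ IsItin f a b c x μ}.encard ≤ 2 ∧
      ∀ x ∈ {x | x ∈ Icc a b ∧ f^[n] x = x ∧ IsItin f a b c x μ},
        ∀ y ∈ {x | x ∈ Icc a b ∧ f^[n] x = x ∧ IsItin f a b c x μ},
          x ≠ y → ∃ r : ℕ, κ = shiftSeq r μ

/-!
Let `T = 1 0^{κ_1} 11 0^{κ_2} 11 ⋯` be the infinite word of `q = m/n`, so that `c_q = T_0 ⋯ T_n`.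
Since `κ_{i+m} = κ_i` for `i ≥ 2` and `κ_{m+1} = κ_1 - 1`, the word `T` satisfies
`σ^{n+1}T = 1σ²T` exactly. If `1σ²α ≺ σ^{n+1}α`, then `α` follows `T` up to the first
disagreement of these two sequences and leaves `T` there upwards, so `T ≺ α`, a fact decided
on a finite prefix. For `q' = Mm/(Mn+1)` with `m ∣ M` large, `q' < q` and `(c_{q'}0)^∞` agrees
with `T` on that prefix, hence `(c_{q'}0)^∞ ≺ α` and `q(α) ≤ q' < q`.
-/

open Finset

lemma umLT_or_umLT_of_ne {α β : Bseq} (h : α ≠ β) : umLT α β ∨ umLT β α := by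
  classical
  have hex : ∃ i, α i ≠ β i := by
    by_contra! hc
    exact h (funext hc)
  set r := Nat.find hex
  have hagree : ∀ i < r, α i = β i := fun i hi => not_not.1 (Nat.find_min hex hi)
  have hr : α r ≠ β r := Nat.find_spec hex
  have hsum : ∑ i ∈ range r, (α i : ℕ) = ∑ i ∈ range r, (β i : ℕ) :=
    sum_congr rfl fun i hi => by rw [hagree i (mem_range.1 hi)]
  have hvals : (α r : ℕ) + β r = 1 := by
    have := (α r).isLt
    have := (β r).isLt
    have := Fin.val_ne_of_ne hr
    omega
  rcases Nat.even_or_odd (∑ i ∈ range (r + 1), (α i : ℕ)) with hev | hodd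
  · exact Or.inl ⟨r, hagree, hr, hev⟩
  · refine Or.inr ⟨r, fun i hi => (hagree i hi).symm, hr.symm, ?_⟩
    rw [sum_range_succ, Nat.odd_iff] at hodd
    rw [sum_range_succ, Nat.even_iff]
    omega

lemma umLT.exists_prefix_stable {γ α : Bseq} (h : umLT γ α) :
    ∃ R, ∀ γ' : Bseq, (∀ i ≤ R, γ' i = γ i) → umLT γ' α := by
  obtain ⟨R, hagree, hne, hev⟩ := h
  refine ⟨R, fun γ' hγ' => ⟨R, fun i hi => (hγ' i hi.le).trans (hagree i hi), ?_, ?_⟩⟩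
  · rwa [hγ' R le_rfl]
  · rwa [sum_congr rfl fun i hi => by rw [hγ' i (Nat.lt_succ_iff.1 (mem_range.1 hi))]]

lemma oneShift2_congr {α β : Bseq} {k : ℕ} (h : α (k + 1) = β (k + 1)) :
    oneShift2 α k = oneShift2 β k := by
  simp only [oneShift2, h]

theorem umLT_of_oneShift2_umLT_shiftSeq {T α : Bseq} {n : ℕ} (hn : 0 < n)
    (hT : shiftSeq (n + 1) T = oneShift2 T)
    (hTeven : Even (∑ i ∈ range (n + 1), (T i : ℕ)))
    (hpre : ∀ i ≤ n, α i = T i)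
    (h : umLT (oneShift2 α) (shiftSeq (n + 1) α)) : umLT T α := by
  obtain ⟨r, hagree, hne, hev⟩ := h
  have hr : 0 < r := by
    refine Nat.pos_of_ne_zero fun hr => ?_
    simp [hr, oneShift2] at hev
  have hαT : ∀ j ≤ n + r, α j = T j := by
    intro j
    induction j using Nat.strong_induction_on with
    | _ j ih =>
      intro hj
      rcases le_or_gt j n with hjn | hjn
      · exact hpre j hjn
      obtain ⟨k, rfl⟩ : ∃ k, j = k + (n + 1) := ⟨j - (n + 1), by omega⟩
      calc α (k + (n + 1)) = oneShift2 α k := (hagree k (by omega)).symm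
        _ = oneShift2 T k := oneShift2_congr (ih (k + 1) (by omega) (by omega))
        _ = T (k + (n + 1)) := (congrFun hT k).symm
  have hβ : ∀ i ≤ r, oneShift2 α i = T (i + (n + 1)) := fun i hi =>
    (oneShift2_congr (hαT (i + 1) (by omega))).trans (congrFun hT i).symm
  refine ⟨r + (n + 1), fun i hi => (hαT i (by omega)).symm,
    fun h' => hne ((hβ r le_rfl).trans h'), ?_⟩
  rw [show r + (n + 1) + 1 = (n + 1) + (r + 1) by omega, sum_range_add]
  refine hTeven.add ?_
  rwa [sum_congr rfl fun i hi => by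
    rw [add_comm, ← hβ i (Nat.lt_succ_iff.1 (mem_range.1 hi))]]

lemma height_le_of_umLT {α : Bseq} {q : ℚ} (hq0 : 0 < q) (hq : q ≤ 1 / 2)
    (h : umLT (perSeq (cqWord q q.num.toNat ++ [0])) α) : height α ≤ q := by
  refine csInf_le ⟨0, ?_⟩ (Or.inl ⟨q, rfl, hq0, hq, h⟩)
  rintro x (⟨q', rfl, hq', -, -⟩ | rfl)
  · exact_mod_cast hq'.le
  · norm_num

section Words

variable {q q' : ℝ} {j : ℕ}

noncomputable def tailBlocks (q : ℝ) (j M : ℕ) : List (Fin 2) :=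
  ((List.range M).map fun t => 1 :: 1 :: List.replicate (kap q (j + 1 + t)) 0).flatten

lemma tailBody_eq (q : ℝ) (j M : ℕ) :
    tailBody q j M = 1 :: (List.replicate (kap q j) 0 ++ tailBlocks q j M) := rfl

lemma tailBlocks_succ (q : ℝ) (j M : ℕ) :
    tailBlocks q j (M + 1) =
      tailBlocks q j M ++ 1 :: 1 :: List.replicate (kap q (j + 1 + M)) 0 := by
  simp [tailBlocks, List.range_succ]

lemma tailBlocks_one (q : ℝ) (j : ℕ) :
    tailBlocks q j 1 = 1 :: 1 :: List.replicate (kap q (j + 1)) 0 := by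
  simp [tailBlocks]

lemma tailBlocks_add (q : ℝ) (j A B : ℕ) :
    tailBlocks q j (A + B) = tailBlocks q j A ++ tailBlocks q (j + A) B := by
  induction B with
  | zero => simp [tailBlocks]
  | succ B ih =>
    rw [← add_assoc, tailBlocks_succ, ih, tailBlocks_succ, List.append_assoc, add_right_comm j A 1,
      add_assoc (j + 1)]

lemma le_length_tailBlocks (q : ℝ) (j M : ℕ) : M ≤ (tailBlocks q j M).length := by
  induction M with
  | zero => simp
  | succ M ih => simp only [tailBlocks_succ, List.length_append, List.length_cons]; omega

lemma sum_tailBlocks (q : ℝ) (j M : ℕ) : ((tailBlocks q j M).map Fin.val).sum = 2 * M := by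
  induction M with
  | zero => simp [tailBlocks]
  | succ M ih => simp [tailBlocks_succ, ih, mul_add]

lemma tailBody_add (q : ℝ) (j A B : ℕ) :
    tailBody q j (A + B) = tailBody q j A ++ tailBlocks q (j + A) B := by
  simp [tailBody_eq, tailBlocks_add]

lemma tailBody_prefix (q : ℝ) (j : ℕ) {A B : ℕ} (h : A ≤ B) : tailBody q j A <+: tailBody q j B :=
  ⟨tailBlocks q (j + A) (B - A), by rw [← tailBody_add, Nat.add_sub_cancel' h]⟩

lemma lt_length_tailBody (q : ℝ) (j M : ℕ) : M < (tailBody q j M).length := by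
  have := le_length_tailBlocks q j M
  simp only [tailBody_eq, List.length_cons, List.length_append]
  omega

lemma sum_tailBody (q : ℝ) (j M : ℕ) : ((tailBody q j M).map Fin.val).sum = 2 * M + 1 := by
  simp [tailBody_eq, sum_tailBlocks, add_comm]

lemma tailBody_congr {M : ℕ} (h : ∀ i, j ≤ i → i ≤ j + M → kap q i = kap q' i) :
    tailBody q j M = tailBody q' j M := by
  rw [tailBody_eq, tailBody_eq, h j le_rfl (by omega), tailBlocks, tailBlocks]
  congr 3
  refine List.map_congr_left fun t ht => ?_
  rw [h _ (by omega) (by rw [List.mem_range] at ht; omega)]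

lemma tailSeq_eq_getD {i M : ℕ} (h : i < (tailBody q j M).length) :
    tailSeq q j i = (tailBody q j M).getD i 0 := by
  obtain hM | hM := le_total (i + 1) M
  · obtain ⟨t, ht⟩ := tailBody_prefix q j hM
    have := lt_length_tailBody q j (i + 1)
    rw [tailSeq, ← ht, List.getD_append _ _ _ _ (by omega)]
  · obtain ⟨t, ht⟩ := tailBody_prefix q j hM
    rw [tailSeq, ← ht, List.getD_append _ _ _ _ h]

lemma tailSeq_congr {i : ℕ} (h : ∀ k, j ≤ k → k ≤ j + i + 1 → kap q k = kap q' k) :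
    tailSeq q j i = tailSeq q' j i := by
  rw [tailSeq, tailSeq, tailBody_congr fun k hk₁ hk₂ => h k hk₁ (by omega)]

lemma perSeq_cqWord_eq_tailSeq {N i : ℕ} (hi : i < N) :
    perSeq (cqWord q N ++ [0]) i = tailSeq q 1 i := by
  have hlen := lt_length_tailBody q 1 (N - 1)
  have hi' : i < (tailBody q 1 (N - 1)).length := by omega
  have hW : i < (cqWord q N ++ [0]).length := by
    simp only [cqWord, List.length_append, List.length_singleton]
    omega
  rw [perSeq, Nat.mod_eq_of_lt hW, cqWord, List.append_assoc, List.getD_append _ _ _ _ hi',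
    tailSeq_eq_getD hi']

lemma sum_range_getD (l : List (Fin 2)) :
    ∑ i ∈ range l.length, (l.getD i 0 : ℕ) = (l.map Fin.val).sum := by
  induction l with
  | nil => simp
  | cons a l ih =>
    rw [List.length_cons, sum_range_succ']
    simp only [List.getD_cons_succ, List.getD_cons_zero, ih, List.map_cons, List.sum_cons]
    ring

end Words

section KappaOfRational

variable {m n : ℕ}

lemma floor_natCast_div_natCast_real (a b : ℕ) : ⌊(a : ℝ) / b⌋ = ((a / b : ℕ) : ℤ) := by
  rw [← Int.natCast_floor_eq_floor (by positivity), Nat.floor_div_eq_div]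

lemma kap_div_one (m n : ℕ) : kap ((m : ℝ) / n) 1 = n / m - 1 := by
  rw [kap, if_pos rfl, one_div_div, floor_natCast_div_natCast_real]
  omega

lemma kap_div_of_two_le {i : ℕ} (hi : 2 ≤ i) :
    kap ((m : ℝ) / n) i = i * n / m - (i - 1) * n / m - 2 := by
  have h₁ : (i : ℝ) / (m / n) = ((i * n : ℕ) : ℝ) / m := by push_cast; field_simp
  have h₂ : ((i : ℝ) - 1) / (m / n) = (((i - 1) * n : ℕ) : ℝ) / m := by
    push_cast [Nat.cast_sub (by omega : 1 ≤ i)]; field_simp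
  rw [kap, if_neg (by omega), h₁, h₂, floor_natCast_div_natCast_real,
    floor_natCast_div_natCast_real]
  omega

lemma mul_div_add_two_le (hm : 0 < m) (hmn : 2 * m ≤ n) (i : ℕ) :
    i * n / m + 2 ≤ (i + 1) * n / m := by
  have h₁ : 2 ≤ n / m := (Nat.le_div_iff_mul_le hm).2 (by omega)
  have h₂ : i * n / m + n / m ≤ (i * n + n) / m := Nat.div_add_div_le_add_div
  rw [add_one_mul]
  omega

lemma kap_div_add_self (hm : 0 < m) {i : ℕ} (hi : 2 ≤ i) :
    kap ((m : ℝ) / n) (i + m) = kap ((m : ℝ) / n) i := by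
  have shift : ∀ k, (k + m) * n / m = k * n / m + n := fun k => by
    rw [add_mul, Nat.add_mul_div_left _ _ hm]
  rw [kap_div_of_two_le (by omega), kap_div_of_two_le hi, show i + m - 1 = (i - 1) + m by omega,
    shift, shift]
  omega

lemma kap_div_self_add_one (hm : 0 < m) (hmn : 2 * m ≤ n) :
    kap ((m : ℝ) / n) (m + 1) = kap ((m : ℝ) / n) 1 - 1 := by
  have : 2 ≤ n / m := (Nat.le_div_iff_mul_le hm).2 (by omega)
  rw [kap_div_of_two_le (by omega), kap_div_one, Nat.add_sub_cancel,
    Nat.mul_div_cancel_left n hm, add_one_mul, Nat.mul_add_div hm]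
  omega

lemma length_tailBody_div (hm : 0 < m) (hmn : 2 * m ≤ n) (M : ℕ) :
    (tailBody ((m : ℝ) / n) 1 M).length = (M + 1) * n / m := by
  induction M with
  | zero =>
    have : 2 ≤ n / m := (Nat.le_div_iff_mul_le hm).2 (by omega)
    simp only [tailBody_eq, tailBlocks, kap_div_one, List.range_zero, List.map_nil,
      List.flatten_nil, List.append_nil, List.length_cons, List.length_replicate, zero_add, one_mul]
    omega
  | succ M ih =>
    have h := mul_div_add_two_le hm hmn (M + 1)
    rw [tailBody_add, List.length_append, ih, tailBlocks_one, List.length_cons, List.length_cons,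
      List.length_replicate, kap_div_of_two_le (by omega), show 1 + M + 1 = M + 1 + 1 by omega,
      Nat.add_sub_cancel]
    omega

end KappaOfRational

section TailSequence

variable {m n : ℕ}

lemma length_tailBody_div_pred (hm : 0 < m) (hmn : 2 * m ≤ n) :
    (tailBody ((m : ℝ) / n) 1 (m - 1)).length = n := by
  rw [length_tailBody_div hm hmn, Nat.sub_add_cancel hm, Nat.mul_div_cancel_left n hm]

lemma tailBlocks_div_self_add_one (hm : 0 < m) (M : ℕ) :
    tailBlocks ((m : ℝ) / n) (m + 1) M = tailBlocks ((m : ℝ) / n) 1 M := by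
  refine congrArg List.flatten (List.map_congr_left fun t _ => ?_)
  rw [show m + 1 + 1 + t = (2 + t) + m by omega, kap_div_add_self hm (by omega)]

lemma exists_tailSeq_div_self_add (hm : 0 < m) (hmn : 2 * m ≤ n) (k : ℕ) :
    ∃ L : List (Fin 2), tailSeq ((m : ℝ) / n) 1 (n + k) = (1 :: 1 :: L).getD k 0 ∧
      tailSeq ((m : ℝ) / n) 1 k = (1 :: 0 :: L).getD k 0 := by
  have hlen := length_tailBody_div_pred hm hmn
  set q := (m : ℝ) / n
  have hκ : 1 ≤ kap q 1 := by
    rw [kap_div_one]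
    have : 2 ≤ n / m := (Nat.le_div_iff_mul_le hm).2 (by omega)
    omega
  set L := List.replicate (kap q 1 - 1) 0 ++ tailBlocks q 1 k
  have hfar : tailBody q 1 (m + k) = tailBody q 1 (m - 1) ++ 1 :: 1 :: L := by
    rw [show m + k = (m - 1) + (1 + k) by omega, tailBody_add, tailBlocks_add, tailBlocks_one,
      Nat.add_sub_cancel' hm, tailBlocks_div_self_add_one hm, kap_div_self_add_one hm hmn]
    rfl
  have hnear : tailBody q 1 k = 1 :: 0 :: L := by
    rw [tailBody_eq, ← Nat.sub_add_cancel hκ, List.replicate_succ]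
    rfl
  refine ⟨L, ?_, ?_⟩
  · have hlt : n + k < (tailBody q 1 (m + k)).length := by
      have := le_length_tailBlocks q 1 k
      simp only [hfar, L, List.length_append, List.length_cons, List.length_replicate, hlen]
      omega
    rw [tailSeq_eq_getD hlt, hfar,
      List.getD_append_right _ _ _ _ (by omega), hlen, Nat.add_sub_cancel_left]
  · rw [tailSeq_eq_getD (lt_length_tailBody q 1 k), hnear]

lemma shiftSeq_tailSeq_div (hm : 0 < m) (hmn : 2 * m ≤ n) :
    shiftSeq (n + 1) (tailSeq ((m : ℝ) / n) 1) = oneShift2 (tailSeq ((m : ℝ) / n) 1) := by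
  funext i
  obtain ⟨L, hfar, hnear⟩ := exists_tailSeq_div_self_add hm hmn (i + 1)
  rw [shiftSeq, show i + (n + 1) = n + (i + 1) by omega, hfar]
  rcases i with _ | i
  · rfl
  · simp [oneShift2, hnear]

lemma tailSeq_div_eq_cqWord (hm : 0 < m) (hmn : 2 * m ≤ n) {i : ℕ} (hi : i ≤ n) :
    tailSeq ((m : ℝ) / n) 1 i = (cqWord ((m : ℝ) / n) m).getD i 0 := by
  have hlen := length_tailBody_div_pred hm hmn
  rw [cqWord]
  rcases hi.lt_or_eq with hi | rfl
  · rw [List.getD_append _ _ _ _ (by omega), tailSeq_eq_getD (M := m - 1) (by omega)]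
  · obtain ⟨L, hfar, -⟩ := exists_tailSeq_div_self_add hm hmn 0
    rw [add_zero] at hfar
    rw [List.getD_append_right _ _ _ _ hlen.le, hlen, Nat.sub_self, hfar]
    rfl

lemma even_sum_tailSeq_div (hm : 0 < m) (hmn : 2 * m ≤ n) :
    Even (∑ i ∈ range (n + 1), (tailSeq ((m : ℝ) / n) 1 i : ℕ)) := by
  have hlen : (cqWord ((m : ℝ) / n) m).length = n + 1 := by
    simp [cqWord, length_tailBody_div_pred hm hmn]
  rw [sum_congr rfl fun i hi => by
      rw [tailSeq_div_eq_cqWord hm hmn (Nat.lt_succ_iff.1 (mem_range.1 hi))],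
    ← hlen, sum_range_getD, cqWord, List.map_append, List.sum_append, sum_tailBody]
  exact ⟨m, by rw [List.map_singleton, List.sum_singleton, Fin.val_one]; omega⟩

end TailSequence

section Approximation

variable {m n : ℕ}

lemma mul_mul_add_one_div_eq_mul_div (hm : 0 < m) {M i : ℕ} (hi : i < M) :
    i * (M * n + 1) / (M * m) = i * n / m := by
  have hmod : i * n % m + 1 ≤ m := Nat.mod_lt (i * n) hm
  have hexpand : i * (M * n + 1) = i * n / m * (M * m) + (M * (i * n % m) + i) := by
    rw [show i * (M * n + 1) = M * (i * n) + i by ring]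
    conv_lhs => rw [← Nat.div_add_mod (i * n) m]
    ring
  have hrem : M * (i * n % m) + i < M * m := by
    have := Nat.mul_le_mul_left M hmod
    rw [mul_add_one] at this
    omega
  rw [hexpand, Nat.add_comm, Nat.add_mul_div_right _ _ (Nat.mul_pos (by omega) hm),
    Nat.div_eq_of_lt hrem, zero_add]

lemma kap_approx (hm : 0 < m) {M j : ℕ} (hj : 1 ≤ j) (hjM : j < M) :
    kap (((M * m : ℕ) : ℝ) / ((M * n + 1 : ℕ) : ℝ)) j = kap ((m : ℝ) / n) j := by
  rcases hj.eq_or_lt with rfl | hj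
  · rw [kap_div_one, kap_div_one]
    simpa using congrArg (· - 1) (mul_mul_add_one_div_eq_mul_div (n := n) hm hjM)
  · rw [kap_div_of_two_le hj, kap_div_of_two_le hj, mul_mul_add_one_div_eq_mul_div hm hjM,
      mul_mul_add_one_div_eq_mul_div hm (by omega : j - 1 < M)]

lemma exists_rat_approx (hm : 0 < m) (hmn : 2 * m ≤ n) (R : ℕ) :
    ∃ q' : ℚ, 0 < q' ∧ q' ≤ 1 / 2 ∧ (q' : ℝ) < m / n ∧
      ∀ i ≤ R, perSeq (cqWord q' q'.num.toNat ++ [0]) i = tailSeq ((m : ℝ) / n) 1 i := by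
  -- `m ∣ M` makes `Mm / (Mn + 1)` a reduced fraction
  set M := m * (R + 3)
  have hcop : Nat.Coprime (M * m) (M * n + 1) := by
    refine Nat.Coprime.mul_left ?_ ?_
    · exact (Nat.coprime_mul_left_add_right M 1 n).2 (Nat.coprime_one_right M)
    · rw [show M * n = m * ((R + 3) * n) by ring]
      exact (Nat.coprime_mul_left_add_right m 1 _).2 (Nat.coprime_one_right m)
  set q' : ℚ := ((M * m : ℕ) : ℚ) / ((M * n + 1 : ℕ) : ℚ)
  have hnum : q'.num.toNat = M * m := by
    have := Rat.num_div_eq_of_coprime (a := (M * m : ℕ)) (b := (M * n + 1 : ℕ)) (by positivity)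
      (by rw [Int.natAbs_natCast, Int.natAbs_natCast]; exact hcop)
    rw [Int.cast_natCast, Int.cast_natCast] at this
    rw [this, Int.toNat_natCast]
  have hq' : (q' : ℝ) = ((M * m : ℕ) : ℝ) / ((M * n + 1 : ℕ) : ℝ) := by
    simp [q']
  have hRM : R + 3 ≤ M := Nat.le_mul_of_pos_left _ hm
  have hMM : M ≤ M * m := Nat.le_mul_of_pos_right _ hm
  refine ⟨q', by positivity, ?_, ?_, fun i hi => ?_⟩
  · rw [div_le_div_iff₀ (by positivity) two_pos]
    exact_mod_cast (by nlinarith : M * m * 2 ≤ 1 * (M * n + 1))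
  · rw [hq', div_lt_div_iff₀ (by positivity) (by norm_cast; omega)]
    exact_mod_cast (by nlinarith : M * m * n < m * (M * n + 1))
  · rw [hnum, perSeq_cqWord_eq_tailSeq (by omega), hq']
    exact tailSeq_congr fun k hk₁ hk₂ => kap_approx hm hk₁ (by omega)

end Approximation

theorem stmt16_general (m n : ℕ) (hm : 0 < m) (hn : 0 < n)
    (hq : (m : ℝ) / n < 1 / 2) (α : Bseq)
    (hheight : height α = (m : ℝ) / n)
    (hpre : ∀ i, i < n + 1 → α i = (cqWord ((m : ℝ) / n) m).getD i 0) :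
    umLE (shiftSeq (n + 1) α) (oneShift2 α) := by
  have hmn : 2 * m ≤ n := by
    rw [div_lt_div_iff₀ (by positivity) two_pos] at hq
    exact_mod_cast (by push_cast; linarith : ((2 * m : ℕ) : ℝ) ≤ n)
  rcases eq_or_ne (shiftSeq (n + 1) α) (oneShift2 α) with h | h
  · exact Or.inr h
  rcases umLT_or_umLT_of_ne h with h | h
  · exact Or.inl h
  exfalso
  have hT : umLT (tailSeq ((m : ℝ) / n) 1) α :=
    umLT_of_oneShift2_umLT_shiftSeq hn (shiftSeq_tailSeq_div hm hmn) (even_sum_tailSeq_div hm hmn)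
      (fun i hi => (hpre i (by omega)).trans (tailSeq_div_eq_cqWord hm hmn hi).symm) h
  obtain ⟨R, hR⟩ := hT.exists_prefix_stable
  obtain ⟨q', hq'0, hq'half, hq'lt, hagree⟩ := exists_rat_approx hm hmn R
  have := height_le_of_umLT hq'0 hq'half (hR _ hagree)
  linarith

/-- If `α ∈ KS` has height `q = m/n ∈ (0,1/2)` and begins with the word `c_q`
(of length `n+1`), then `σ^{n+1}(α) ⪯ 1σ²(α)` in the unimodal order. -/
theorem stmt16 (m n : ℕ) (hm : 0 < m) (hn : 0 < n) (hcop : Nat.Coprime m n)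
    (hq : (m : ℝ) / n < 1 / 2) (α : Bseq) (hα : KSseq α)
    (hheight : height α = (m : ℝ) / n)
    (hpre : ∀ i, i < n + 1 → α i = (cqWord ((m : ℝ) / n) m).getD i 0) :
    umLE (shiftSeq (n + 1) α) (oneShift2 α) :=
  stmt16_general m n hm hn hq α hheight hpre
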